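/- arXiv:1005.4252 — 5 statements merged into one kernel-verified Lean document; each statement's English description precedes it below -/
import Mathlib

section
/- For all nonnegative integers p and k, the super Catalan number S(p,k) := C(2p,p) * C(2k,k) / C(p+k,p) is an integer (i.e., C(p+k,p) divides C(2p,p) * C(2k,k)). -/
/-!
By Kummer's theorem, the `q`-adic valuation of `C(m + n, m)` counts the carries in the base-`q`
addition `m + n`. A carry at digit position `i` means `q ^ i ≤ m % q ^ i + n % q ^ i`, so the
larger of the two residues already produces a carry at position `i` in `m + m` or in `n + n`.
Hence `v_q C(m + n, m) ≤ v_q C(2m, m) + v_q C(2n, n)` for every prime `q`.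
-/

open Finset

theorem padicValNat_choose_add_le {q : ℕ} [Fact q.Prime] (m n : ℕ) :
    padicValNat q ((m + n).choose m) ≤
      padicValNat q ((2 * m).choose m) + padicValNat q ((2 * n).choose n) := by
  set b := Nat.log q (2 * (m + n)) + 1
  have hb : ∀ s ≤ 2 * (m + n), Nat.log q s < b := fun s hs =>
    Nat.lt_succ_of_le (Nat.log_mono_right hs)
  rw [add_comm m n, padicValNat_choose' (hb _ (by omega)), two_mul,
    padicValNat_choose' (hb _ (by omega)), two_mul, padicValNat_choose' (hb _ (by omega))]
  refine le_trans ?_ (card_union_le _ _)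
  rw [← filter_or]
  exact card_le_card (monotone_filter_right _ fun i hcarry => by omega)

/-- The super Catalan number `S(p,k) = C(2p,p)·C(2k,k)/C(p+k,p)` is an integer. -/
theorem superCatalan_integer (p k : ℕ) :
    (p + k).choose p ∣ (2 * p).choose p * (2 * k).choose k := by
  have hpk := Nat.choose_pos (Nat.le_add_right p k)
  have hp := Nat.choose_pos (show p ≤ 2 * p by omega)
  have hk := Nat.choose_pos (show k ≤ 2 * k by omega)
  rw [← Nat.factorization_prime_le_iff_dvd hpk.ne' (by positivity)]
  intro q hq
  have := Fact.mk hq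
  rw [Nat.factorization_def _ hq, Nat.factorization_def _ hq, padicValNat.mul hp.ne' hk.ne']
  exact padicValNat_choose_add_le p k
end

section
/- For all positive integers p and k, 2 * ( C(2k,k) * C(2p-1,p) + ∑_{j=1}^{k} (-1)^j * C(2k, k-j) * C(2p, p-j) ) equals the super Catalan number S(p,k) = C(2p,p)*C(2k,k)/C(p+k,p). -/
/-- Binomial coefficient `C(n,k)` for an integer lower index, equal to `0` when `k < 0`. -/
def intChoose (n : ℕ) (k : ℤ) : ℤ := if 0 ≤ k then n.choose k.toNat else 0

/-!
Write `c n j = C(2n, n+j)` for `j ∈ ℤ` and `A m n = ∑_{j ∈ ℤ} (-1)^j c m j c n j`. Since `c n` is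
even, `A p k = C(2p,p) C(2k,k) + 2 ∑_{j=1}^k (-1)^j c p j c k j`, which is the left-hand side
because `C(2p,p) = 2 C(2p-1,p)`. Pascal's rule applied twice gives
`c (m+1) j = c m (j-1) + 2 c m j + c m (j+1)`; expanding `A (m+1) n` and `A m (n+1)` this way, the
alternating sign makes the cross terms cancel in pairs after the shift `j ↦ j + 1`, so
`A (m+1) n + A m (n+1) = 4 A m n`. The super Catalan numbers satisfy the same recursion and agree
with `A` at `n = 0`.
-/

open Finset Function

lemma intChoose_natCast (n i : ℕ) : intChoose n i = n.choose i := by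
  simp [intChoose]

lemma intChoose_of_neg (n : ℕ) {t : ℤ} (ht : t < 0) : intChoose n t = 0 := by
  simp [intChoose, not_le.2 ht]

lemma intChoose_of_lt (n : ℕ) {t : ℤ} (ht : (n : ℤ) < t) : intChoose n t = 0 := by
  lift t to ℕ using by omega
  rw [intChoose_natCast, Nat.choose_eq_zero_of_lt (by omega), Nat.cast_zero]

lemma intChoose_succ (n : ℕ) (t : ℤ) :
    intChoose (n + 1) t = intChoose n (t - 1) + intChoose n t := by
  rcases lt_trichotomy t 0 with ht | rfl | ht
  · simp [intChoose_of_neg _ ht, intChoose_of_neg _ (show t - 1 < 0 by omega)]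
  · simp [intChoose]
  · obtain ⟨s, rfl⟩ : ∃ s : ℕ, t = s + 1 := ⟨t.toNat - 1, by omega⟩
    rw [add_sub_cancel_right, ← Nat.cast_succ, intChoose_natCast, intChoose_natCast,
      intChoose_natCast, Nat.choose_succ_succ, Nat.cast_add]

lemma intChoose_symm {n : ℕ} {a b : ℤ} (h : a + b = n) : intChoose n a = intChoose n b := by
  rcases lt_or_ge a 0 with ha | ha
  · rw [intChoose_of_neg _ ha, intChoose_of_lt _ (by omega)]
  rcases lt_or_ge b 0 with hb | hb
  · rw [intChoose_of_lt _ (by omega), intChoose_of_neg _ hb]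
  lift a to ℕ using ha
  lift b to ℕ using hb
  rw [intChoose_natCast, intChoose_natCast, Nat.choose_symm_of_eq_add (by omega : n = a + b)]

def centeredChoose (n : ℕ) (j : ℤ) : ℤ := intChoose (2 * n) (n + j)

lemma centeredChoose_neg (n : ℕ) (j : ℤ) : centeredChoose n (-j) = centeredChoose n j :=
  intChoose_symm (by push_cast; ring)

lemma intChoose_two_mul_sub (n : ℕ) (j : ℤ) :
    intChoose (2 * n) (n - j) = centeredChoose n j := by
  rw [← centeredChoose_neg, centeredChoose, sub_eq_add_neg]

lemma centeredChoose_zero_right (n : ℕ) : centeredChoose n 0 = (2 * n).choose n := by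
  rw [centeredChoose, add_zero, intChoose_natCast]

lemma centeredChoose_zero_left (j : ℤ) : centeredChoose 0 j = if j = 0 then 1 else 0 := by
  split_ifs with hj
  · simp [hj, centeredChoose, intChoose]
  · rcases lt_or_gt_of_ne hj with hj | hj
    · exact intChoose_of_neg _ (by simpa using hj)
    · exact intChoose_of_lt _ (by simpa using hj)

lemma centeredChoose_succ (n : ℕ) (j : ℤ) :
    centeredChoose (n + 1) j =
      centeredChoose n (j - 1) + 2 * centeredChoose n j + centeredChoose n (j + 1) := by
  simp only [centeredChoose, mul_add, mul_one, intChoose_succ]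
  push_cast
  ring_nf

lemma support_centeredChoose_subset (n : ℕ) :
    support (fun j ↦ (centeredChoose n j : ℚ)) ⊆ Set.Icc (-(n : ℤ)) n := by
  intro j hj
  rw [mem_support] at hj
  by_contra hout
  rw [Set.mem_Icc, not_and_or, not_le, not_le] at hout
  refine hj ?_
  rcases hout with h | h
  · rw [centeredChoose, intChoose_of_neg _ (by omega), Int.cast_zero]
  · rw [centeredChoose, intChoose_of_lt _ (by push_cast; omega), Int.cast_zero]

lemma hasFiniteSupport_centeredChoose (n : ℕ) :
    HasFiniteSupport fun j ↦ (centeredChoose n j : ℚ) :=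
  (Set.finite_Icc _ _).subset (support_centeredChoose_subset n)

lemma finsum_neg_one_zpow_shift {K : Type*} [Field K] (f g : ℤ → K) :
    ∑ᶠ j : ℤ, (-1 : K) ^ j * f (j - 1) * g j =
      -∑ᶠ j : ℤ, (-1 : K) ^ j * f j * g (j + 1) := by
  rw [← finsum_comp_equiv (Equiv.addRight 1), ← finsum_neg_distrib]
  refine finsum_congr fun j ↦ ?_
  simp only [Equiv.coe_addRight, add_sub_cancel_right,
    zpow_add_one₀ (by norm_num : (-1 : K) ≠ 0)]
  ring

noncomputable def altCenteredSum (m n : ℕ) : ℚ :=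
  ∑ᶠ j : ℤ, (-1 : ℚ) ^ j * centeredChoose m j * centeredChoose n j

lemma altCenteredSum_comm (m n : ℕ) : altCenteredSum m n = altCenteredSum n m := by
  simp only [altCenteredSum, mul_assoc, mul_comm (centeredChoose m _ : ℚ)]

lemma altCenteredSum_zero_right (m : ℕ) : altCenteredSum m 0 = (2 * m).choose m := by
  rw [altCenteredSum, finsum_eq_single _ 0 fun j hj ↦ by simp [centeredChoose_zero_left, hj]]
  simp [centeredChoose_zero_right]

lemma altCenteredSum_succ_left (m n : ℕ) :
    altCenteredSum (m + 1) n =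
      ∑ᶠ j : ℤ, (-1 : ℚ) ^ j * centeredChoose m (j - 1) * centeredChoose n j +
        2 * altCenteredSum m n +
        ∑ᶠ j : ℤ, (-1 : ℚ) ^ j * centeredChoose m (j + 1) * centeredChoose n j := by
  have hfin (f : ℤ → ℚ) : HasFiniteSupport fun j : ℤ ↦ f j * centeredChoose n j :=
    (hasFiniteSupport_centeredChoose n).fun_mul_right f
  rw [altCenteredSum, altCenteredSum, mul_finsum, ← finsum_add_distrib, ← finsum_add_distrib]
  · refine finsum_congr fun j ↦ ?_
    rw [centeredChoose_succ]
    push_cast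
    ring
  exacts [(hfin _).add (.fun_mul_right _ (hfin _)), hfin _, hfin _, .fun_mul_right _ (hfin _)]

lemma altCenteredSum_succ_left_add_succ_right (m n : ℕ) :
    altCenteredSum (m + 1) n + altCenteredSum m (n + 1) = 4 * altCenteredSum m n := by
  have hswap (a b : ℕ) :
      ∑ᶠ j : ℤ, (-1 : ℚ) ^ j * centeredChoose a j * centeredChoose b (j + 1) =
      ∑ᶠ j : ℤ, (-1 : ℚ) ^ j * centeredChoose b (j + 1) * centeredChoose a j :=
    finsum_congr fun j ↦ by ring
  rw [altCenteredSum_succ_left, altCenteredSum_comm m (n + 1), altCenteredSum_succ_left,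
    finsum_neg_one_zpow_shift (fun j ↦ (centeredChoose m j : ℚ)),
    finsum_neg_one_zpow_shift (fun j ↦ (centeredChoose n j : ℚ)), hswap, hswap,
    altCenteredSum_comm n]
  ring

noncomputable def superCatalan (m n : ℕ) : ℚ :=
  (2 * m).choose m * (2 * n).choose n / (m + n).choose m

lemma superCatalan_eq_factorial (m n : ℕ) :
    superCatalan m n = (2 * m).factorial * (2 * n).factorial /
      (m.factorial * n.factorial * (m + n).factorial) := by
  rw [superCatalan, Nat.cast_choose ℚ (by omega : m ≤ 2 * m),
    Nat.cast_choose ℚ (by omega : n ≤ 2 * n), Nat.cast_choose ℚ (by omega : m ≤ m + n),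
    show 2 * m - m = m by omega, show 2 * n - n = n by omega, Nat.add_sub_cancel_left]
  field_simp

lemma superCatalan_comm (m n : ℕ) : superCatalan m n = superCatalan n m := by
  rw [superCatalan_eq_factorial, superCatalan_eq_factorial, add_comm n]
  ring

lemma superCatalan_zero_right (m : ℕ) : superCatalan m 0 = (2 * m).choose m := by
  simp [superCatalan]

lemma superCatalan_succ_left (m n : ℕ) :
    superCatalan (m + 1) n = 2 * (2 * m + 1) / (m + n + 1) * superCatalan m n := by
  rw [superCatalan_eq_factorial, superCatalan_eq_factorial,
    show 2 * (m + 1) = 2 * m + 1 + 1 by ring, show m + 1 + n = m + n + 1 by ring]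
  push_cast [Nat.factorial_succ]
  field_simp
  ring

lemma superCatalan_succ_left_add_succ_right (m n : ℕ) :
    superCatalan (m + 1) n + superCatalan m (n + 1) = 4 * superCatalan m n := by
  rw [superCatalan_comm m, superCatalan_succ_left, superCatalan_succ_left, superCatalan_comm n]
  field_simp
  ring

lemma altCenteredSum_eq_superCatalan (m n : ℕ) : altCenteredSum m n = superCatalan m n := by
  induction n generalizing m with
  | zero => rw [altCenteredSum_zero_right, superCatalan_zero_right]
  | succ n ih =>
    linarith [altCenteredSum_succ_left_add_succ_right m n,
      superCatalan_succ_left_add_succ_right m n, ih m, ih (m + 1)]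

lemma altCenteredSum_eq_add_two_mul_sum (m n : ℕ) :
    altCenteredSum m n = (2 * m).choose m * (2 * n).choose n +
      2 * ∑ j ∈ Icc 1 n, (-1 : ℚ) ^ j * centeredChoose m j * centeredChoose n j := by
  set f : ℤ → ℚ := fun j ↦ (-1 : ℚ) ^ j * centeredChoose m j * centeredChoose n j
  have hf : f.Even := fun j ↦ by
    simp only [f, centeredChoose_neg, zpow_neg, ← inv_zpow, inv_neg_one]
  have hsupp : support f ⊆ ↑(Icc (-(n : ℤ)) n) := by
    rw [coe_Icc]
    exact (support_mul_subset_right _ _).trans (support_centeredChoose_subset n)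
  rw [altCenteredSum, finsum_eq_finsetSum_of_support_subset f hsupp, sum_Icc_of_even_eq_range hf,
    range_eq_Ico, sum_eq_sum_Ico_succ_bot n.succ_pos, Nat.succ_eq_add_one, zero_add,
    Ico_add_one_right_eq_Icc]
  simp [f, centeredChoose_zero_right]
  ring

lemma choose_two_mul_eq_two_mul_choose_two_mul_sub_one {p : ℕ} (hp : 0 < p) :
    (2 * p).choose p = 2 * (2 * p - 1).choose p := by
  obtain ⟨q, rfl⟩ := Nat.exists_eq_add_of_lt hp
  rw [zero_add, show 2 * (q + 1) = 2 * q + 1 + 1 by ring, Nat.add_sub_cancel, Nat.choose_succ_succ,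
    Nat.choose_symm_half]
  ring

theorem two_gamma_eq_superCatalan_general (p k : ℕ) (hp : 0 < p) :
    2 * (((2 * k).choose k : ℚ) * ((2 * p - 1).choose p : ℚ) +
        ∑ j ∈ Finset.Icc 1 k,
          (-1 : ℚ) ^ j * (intChoose (2 * k) ((k : ℤ) - j) : ℚ) *
            (intChoose (2 * p) ((p : ℤ) - j) : ℚ)) =
      (((2 * p).choose p : ℚ) * ((2 * k).choose k : ℚ)) / ((p + k).choose p : ℚ) := by
  have hsum : ∑ j ∈ Icc 1 k, (-1 : ℚ) ^ j * (intChoose (2 * k) ((k : ℤ) - j) : ℚ) *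
      (intChoose (2 * p) ((p : ℤ) - j) : ℚ) =
        ∑ j ∈ Icc 1 k, (-1 : ℚ) ^ j * centeredChoose p j * centeredChoose k j :=
    sum_congr rfl fun j _ ↦ by rw [intChoose_two_mul_sub, intChoose_two_mul_sub]; ring
  have hcentral : ((2 * p).choose p : ℚ) = 2 * (2 * p - 1).choose p := by
    exact_mod_cast choose_two_mul_eq_two_mul_choose_two_mul_sub_one hp
  rw [hsum, show _ / _ = superCatalan p k from rfl, ← altCenteredSum_eq_superCatalan,
    altCenteredSum_eq_add_two_mul_sum, hcentral]
  ring

/-- `2·(C(2k,k)C(2p-1,p) + ∑_{j=1}^k (-1)^j C(2k,k-j)C(2p,p-j)) = S(p,k)`. -/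
theorem two_gamma_eq_superCatalan (p k : ℕ) (hp : 0 < p) (hk : 0 < k) :
    2 * (((2 * k).choose k : ℚ) * ((2 * p - 1).choose p : ℚ) +
        ∑ j ∈ Finset.Icc 1 k,
          (-1 : ℚ) ^ j * (intChoose (2 * k) ((k : ℤ) - j) : ℚ) *
            (intChoose (2 * p) ((p : ℤ) - j) : ℚ)) =
      (((2 * p).choose p : ℚ) * ((2 * k).choose k : ℚ)) / ((p + k).choose p : ℚ) :=
  two_gamma_eq_superCatalan_general p k hp
end

section
/- Let μ = (μ_m) be a sequence of complex numbers and let e_k denote the k-th elementary symmetric polynomial in variables z_1,...,z_n (with e_k = 0 for k outside {0,...,n} and e_0 = 1). Then ∑_{0 ≤ i ≤ j ≤ n} μ_{j-i} e_i(z_1,...,z_n) e_j(z_1,...,z_n) = e_n(z_1,...,z_n) * ∑_{k=0}^{n} γ_k e_{n-k}(z_1 + 1/z_1, ..., z_n + 1/z_n), where γ_k = ∑_{j=0}^{⌊k/2⌋} C(k,j) μ_{k-2j}, as an identity of rational functions (valid whenever all z_i are nonzero). -/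
/-!
Multiplying out `(X + z)(1 + z X) = z (1 + X² + (z + z⁻¹) X)` over all `z = zᵢ` gives two
expansions of the same polynomial `∏ᵢ (X + zᵢ)(1 + zᵢ X)`: as `∑ᵢ,ⱼ eᵢ eⱼ X^(n - i + j)`, and as
`eₙ ∑ₖ e_{n-k}(z + z⁻¹) X^(n - k) (1 + X²)^k`. Both sides of the identity are the image of this
polynomial under the linear functional `p ↦ ∑ₘ μₘ [X^(n + m)] p`; on the second expansion the
binomial theorem for `(1 + X²)^k` produces the coefficients `γₖ`.
-/

/-- The `k`-th elementary symmetric function of `z 0, …, z (n-1)`; it vanishes for `k > n`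
and `esym n z 0 = 1`. -/
noncomputable def esym (n : ℕ) (z : Fin n → ℂ) (k : ℕ) : ℂ :=
  ∑ s ∈ Finset.powersetCard k (Finset.univ : Finset (Fin n)), ∏ i ∈ s, z i

open Finset Polynomial

theorem esym_self (n : ℕ) (z : Fin n → ℂ) : esym n z n = ∏ i, z i := by
  have := powersetCard_self (univ : Finset (Fin n))
  rw [card_univ, Fintype.card_fin] at this
  rw [esym, this, sum_singleton]

theorem prod_algebraMap_mul_add_eq_sum_esym {A : Type*} [CommSemiring A] [Algebra ℂ A]
    (n : ℕ) (z : Fin n → ℂ) (a b : A) :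
    ∏ i, (algebraMap ℂ A (z i) * b + a) =
      ∑ k ∈ range (n + 1), algebraMap ℂ A (esym n z k) * b ^ k * a ^ (n - k) := by
  rw [prod_add, sum_powerset, card_univ, Fintype.card_fin]
  refine sum_congr rfl fun k _ => ?_
  rw [esym, map_sum, sum_mul, sum_mul]
  refine sum_congr rfl fun t ht => ?_
  rw [mem_powersetCard_univ] at ht
  rw [prod_mul_distrib, prod_const, prod_const, ← map_prod, ← compl_eq_univ_sdiff, card_compl,
    Fintype.card_fin, ht]

noncomputable def shiftedMoment (n : ℕ) (μ : ℕ → ℂ) : ℂ[X] →ₗ[ℂ] ℂ :=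
  lsum fun e => (if n ≤ e then μ (e - n) else 0) • LinearMap.id

theorem shiftedMoment_C_mul_X_pow (n : ℕ) (μ : ℕ → ℂ) (a : ℂ) (e : ℕ) :
    shiftedMoment n μ (C a * X ^ e) = (if n ≤ e then μ (e - n) else 0) * a := by
  rw [C_mul_X_pow_eq_monomial, shiftedMoment, lsum_apply, sum_monomial_index] <;>
    split_ifs <;> simp

theorem shiftedMoment_X_pow_mul_one_add_sq_pow (n : ℕ) (μ : ℕ → ℂ) {k : ℕ} (hk : k ≤ n) :
    shiftedMoment n μ (X ^ (n - k) * (1 + X ^ 2) ^ k) =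
      ∑ j ∈ range (k / 2 + 1), (k.choose j : ℂ) * μ (k - 2 * j) := by
  have hrange : range (k / 2 + 1) = {j ∈ range (k + 1) | 2 * j ≤ k} := by
    ext j; simp only [mem_filter, mem_range]; omega
  rw [add_pow, mul_sum, map_sum, hrange, sum_filter]
  refine sum_congr rfl fun j hj => ?_
  rw [mem_range] at hj
  rw [one_pow, one_mul, ← pow_mul, ← Nat.cast_comm, ← C_eq_natCast, mul_left_comm, ← pow_add,
    shiftedMoment_C_mul_X_pow]
  by_cases h : 2 * j ≤ k
  · rw [if_pos (by omega), if_pos h, show n - k + 2 * (k - j) - n = k - 2 * j by omega, mul_comm]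
  · rw [if_neg (by omega), if_neg h, zero_mul]

theorem shiftedMoment_prod_one_add_sq_add (n : ℕ) (μ : ℕ → ℂ) (w : Fin n → ℂ) :
    shiftedMoment n μ (∏ i, (C (w i) * X + (1 + X ^ 2))) =
      ∑ k ∈ range (n + 1),
        (∑ j ∈ range (k / 2 + 1), (k.choose j : ℂ) * μ (k - 2 * j)) * esym n w (n - k) := by
  rw [← algebraMap_eq, prod_algebraMap_mul_add_eq_sum_esym, map_sum, ← sum_range_reflect]
  refine sum_congr rfl fun k hk => ?_
  rw [mem_range] at hk
  rw [algebraMap_eq, mul_assoc, C_mul', map_smul, smul_eq_mul, Nat.add_sub_cancel,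
    Nat.sub_sub_self (by omega), shiftedMoment_X_pow_mul_one_add_sq_pow n μ (by omega), mul_comm]

theorem shiftedMoment_prod_mul_prod (n : ℕ) (μ : ℕ → ℂ) (z : Fin n → ℂ) :
    shiftedMoment n μ ((∏ i, (C (z i) + X)) * ∏ i, (C (z i) * X + 1)) =
      ∑ j ∈ range (n + 1), ∑ i ∈ range (j + 1), μ (j - i) * esym n z i * esym n z j := by
  have hleft := prod_algebraMap_mul_add_eq_sum_esym n z (X : ℂ[X]) 1
  have hright := prod_algebraMap_mul_add_eq_sum_esym n z 1 (X : ℂ[X])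
  simp only [algebraMap_eq, mul_one, one_pow] at hleft hright
  rw [hleft, hright, sum_mul_sum, sum_comm, map_sum]
  refine sum_congr rfl fun j hj => ?_
  rw [mem_range] at hj
  have hrange : range (j + 1) = {i ∈ range (n + 1) | i ≤ j} := by
    ext i; simp only [mem_filter, mem_range]; omega
  rw [map_sum, hrange, sum_filter]
  refine sum_congr rfl fun i hi => ?_
  rw [mem_range] at hi
  rw [mul_mul_mul_comm, ← C_mul, ← pow_add, shiftedMoment_C_mul_X_pow]
  by_cases h : i ≤ j
  · rw [if_pos (by omega), if_pos h, show n - i + j - n = j - i by omega, mul_assoc]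
  · rw [if_neg (by omega), if_neg h, zero_mul]

theorem C_mul_add_X_mul_C_mul_X_add_one {z : ℂ} (hz : z ≠ 0) :
    (C z + X) * (C z * X + 1) = C z * (C (z + z⁻¹) * X + (1 + X ^ 2)) := by
  have h : C z * C z⁻¹ = 1 := by rw [← C_mul, mul_inv_cancel₀ hz, C_1]
  rw [C_add]
  linear_combination (-X) * h

theorem branden_identity_general (n : ℕ) (μ : ℕ → ℂ) (z : Fin n → ℂ)
    (hz : ∀ i, z i ≠ 0) :
    ∑ j ∈ Finset.range (n + 1), ∑ i ∈ Finset.range (j + 1),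
        μ (j - i) * esym n z i * esym n z j =
      esym n z n *
        ∑ k ∈ Finset.range (n + 1),
          (∑ j ∈ Finset.range (k / 2 + 1), (k.choose j : ℂ) * μ (k - 2 * j)) *
            esym n (fun i => z i + (z i)⁻¹) (n - k) := by
  rw [← shiftedMoment_prod_mul_prod, ← prod_mul_distrib,
    prod_congr rfl fun i _ => C_mul_add_X_mul_C_mul_X_add_one (hz i), prod_mul_distrib, ← map_prod,
    C_mul', map_smul, shiftedMoment_prod_one_add_sq_add, esym_self, smul_eq_mul]

/-- Brändén's symmetric function identity. -/
theorem branden_identity (n : ℕ) (hn : 0 < n) (μ : ℕ → ℂ) (z : Fin n → ℂ)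
    (hz : ∀ i, z i ≠ 0) :
    ∑ j ∈ Finset.range (n + 1), ∑ i ∈ Finset.range (j + 1),
        μ (j - i) * esym n z i * esym n z j =
      esym n z n *
        ∑ k ∈ Finset.range (n + 1),
          (∑ j ∈ Finset.range (k / 2 + 1), (k.choose j : ℂ) * μ (k - 2 * j)) *
            esym n (fun i => z i + (z i)⁻¹) (n - k) :=
  branden_identity_general n μ z hz
end

section
/- The polynomial 12 + 84x + 36x^2 + 108x^3 has exactly two non-real complex roots (equivalently, it does not have all roots real). -/
/-- The polynomial `12 + 84x + 36x² + 108x³` has exactly two non-real complex roots. -/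
theorem counterexample_two_nonreal_roots :
    ∃ z₁ z₂ : ℂ, z₁ ≠ z₂ ∧
      (12 + 84 * z₁ + 36 * z₁ ^ 2 + 108 * z₁ ^ 3 = 0 ∧ z₁.im ≠ 0) ∧
      (12 + 84 * z₂ + 36 * z₂ ^ 2 + 108 * z₂ ^ 3 = 0 ∧ z₂.im ≠ 0) ∧
      ∀ z : ℂ, 12 + 84 * z + 36 * z ^ 2 + 108 * z ^ 3 = 0 → z.im ≠ 0 →
        z = z₁ ∨ z = z₂ := by
  -- get a real root r of the cubic by the intermediate value theorem
  set f : ℝ → ℝ := fun x => 12 + 84 * x + 36 * x ^ 2 + 108 * x ^ 3 with hf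
  have hc : ContinuousOn f (Set.Icc (-1 : ℝ) 0) := (by continuity : Continuous f).continuousOn
  have hiv := intermediate_value_Icc (by norm_num : (-1:ℝ) ≤ 0) hc
  have h0mem : (0:ℝ) ∈ Set.Icc (f (-1)) (f 0) := by
    simp only [hf]; norm_num
  obtain ⟨r, _, hr0⟩ := hiv h0mem
  have hr : (12 : ℝ) + 84 * r + 36 * r ^ 2 + 108 * r ^ 3 = 0 := hr0
  have hrC : (12 : ℂ) + 84 * (r:ℂ) + 36 * (r:ℂ) ^ 2 + 108 * (r:ℂ) ^ 3 = 0 := by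
    exact_mod_cast congrArg (Complex.ofReal) hr
  -- the quadratic factor has negative discriminant: d² = 3r² + 2r/3 + 3 > 0
  have hd0 : (0:ℝ) < 3 * r ^ 2 + 2 * r / 3 + 3 := by nlinarith [sq_nonneg r, sq_nonneg (r + 1)]
  set d : ℝ := Real.sqrt (3 * r ^ 2 + 2 * r / 3 + 3) with hdd
  have hdpos : 0 < d := Real.sqrt_pos.mpr hd0
  have hdsq : d ^ 2 = 3 * r ^ 2 + 2 * r / 3 + 3 := Real.sq_sqrt hd0.le
  have hdsqC : (d:ℂ) ^ 2 = 3 * (r:ℂ) ^ 2 + 2 * (r:ℂ) / 3 + 3 := by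
    exact_mod_cast congrArg (Complex.ofReal) hdsq
  set z₁ : ℂ := Complex.mk (-(r + 1/3)/2) (d/2) with hz1
  set z₂ : ℂ := Complex.mk (-(r + 1/3)/2) (-(d/2)) with hz2
  have hz1e : z₁ = (↑(-(r + 1/3)/2) : ℂ) + ↑(d/2) * Complex.I := by
    rw [hz1, Complex.mk_eq_add_mul_I]
  have hz2e : z₂ = (↑(-(r + 1/3)/2) : ℂ) + ↑(-(d/2)) * Complex.I := by
    rw [hz2, Complex.mk_eq_add_mul_I]
  have key : ∀ z : ℂ, 12 + 84 * z + 36 * z ^ 2 + 108 * z ^ 3 =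
      108 * (z - r) * (z - z₁) * (z - z₂) := by
    intro z
    rw [hz1e, hz2e]
    push_cast
    linear_combination (-(27:ℂ) * (z - r)) * hdsqC + hrC +
      ((108:ℂ) * (z - r) * (d/2) ^ 2) * Complex.I_sq
  refine ⟨z₁, z₂, ?_, ⟨?_, ?_⟩, ⟨?_, ?_⟩, ?_⟩
  · intro h
    have : (d/2) = -(d/2) := congrArg Complex.im h
    linarith
  · rw [key z₁]; ring
  · show (d/2) ≠ 0; positivity
  · rw [key z₂]; ring
  · show -(d/2) ≠ 0
    have : (0:ℝ) < d/2 := by positivity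
    linarith
  · intro z hz hzim
    rw [key z] at hz
    rcases mul_eq_zero.mp hz with h | h
    · rcases mul_eq_zero.mp h with h | h
      · rcases mul_eq_zero.mp h with h | h
        · norm_num at h
        · exfalso
          apply hzim
          have : z = (r:ℂ) := by linear_combination h
          rw [this]; simp
      · left; linear_combination h
    · right; linear_combination h
end

section
/- The polynomial 3 + 35x + 105x^2 + 105x^3 + 35x^4 + 3x^5 has all roots real and negative, while the polynomial 3 + 35x + 105x^2 + 105x^3 + 35x^4 has a pair of non-real roots. -/
/-!
The quintic is `3 (z + 1) (z² + α z + 1) (z² + β z + 1)` with `α, β = (16 ± √55) / 3`, both at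
least `2`, so each quadratic factor has two negative real roots.

The quartic is `35 z (z + 1)³ + 3`, i.e. `35 (u⁴ - u³) + 3` in `u = z + 1`. It splits over `ℝ` as
`35 (u² + s u + b) (u² - (1 + s) u + b')`: matching coefficients forces
`b = s² (1 + s) / (2 s + 1)`, `b' = s (1 + s)² / (2 s + 1)` and `35 (s (1 + s))³ = 3 (2 s + 1)²`,
which has a root `s ∈ (0, 1)`. For `s > 0` the factor `u² + s u + b` has negative discriminant.
-/

open Complex

theorem exists_neg_real_of_quadratic_eq_zero {p q : ℝ} (hp : 0 < p) (hq : 0 < q)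
    (hdisc : 4 * q ≤ p ^ 2) {z : ℂ} (hz : z ^ 2 + p * z + q = 0) :
    ∃ x : ℝ, x < 0 ∧ z = x := by
  set t := √(p ^ 2 / 4 - q)
  have ht : t ^ 2 = p ^ 2 / 4 - q := Real.sq_sqrt (by linarith)
  have ht_lt : t < p / 2 := by
    rw [Real.sqrt_lt' (by positivity)]
    linarith
  have ht_cast : (t : ℂ) ^ 2 = p ^ 2 / 4 - q := mod_cast congrArg ofReal ht
  have hfactor : (z + p / 2 - t) * (z + p / 2 + t) = 0 := by
    linear_combination hz - ht_cast
  rcases mul_eq_zero.mp hfactor with h | h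
  · exact ⟨t - p / 2, by linarith, by push_cast; linear_combination h⟩
  · exact ⟨-(p / 2) - t, by linarith [Real.sqrt_nonneg (p ^ 2 / 4 - q)],
      by push_cast; linear_combination h⟩

theorem exists_quadratic_eq_zero_im_ne_zero {p q : ℝ} (hdisc : p ^ 2 < 4 * q) :
    ∃ z : ℂ, z ^ 2 + p * z + q = 0 ∧ z.im ≠ 0 := by
  set t := √(4 * q - p ^ 2)
  have ht : t ^ 2 = 4 * q - p ^ 2 := Real.sq_sqrt (by linarith)
  have ht_pos : 0 < t := Real.sqrt_pos.mpr (by linarith)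
  refine ⟨⟨-p / 2, t / 2⟩, ?_, by simp only [ne_eq]; positivity⟩
  apply Complex.ext <;> simp [sq] <;> nlinarith

theorem quintic_eq_factored (z : ℂ) :
    3 + 35 * z + 105 * z ^ 2 + 105 * z ^ 3 + 35 * z ^ 4 + 3 * z ^ 5 =
      3 * (z + 1) * (z ^ 2 + ((16 + √55) / 3 : ℝ) * z + 1) *
        (z ^ 2 + ((16 - √55) / 3 : ℝ) * z + 1) := by
  have h55 : ((√55 : ℝ) : ℂ) ^ 2 = 55 := mod_cast Real.sq_sqrt (by norm_num)
  push_cast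
  linear_combination ((z + 1) * z ^ 2 / 3) * h55

theorem quartic_eq_factored {s b b' : ℝ} (hsum : b + b' = s * (1 + s))
    (hlin : s * b' = (1 + s) * b) (hprod : 35 * b * b' = 3) (z : ℂ) :
    3 + 35 * z + 105 * z ^ 2 + 105 * z ^ 3 + 35 * z ^ 4 =
      35 * ((z + 1) ^ 2 + s * (z + 1) + b) * ((z + 1) ^ 2 - (1 + s) * (z + 1) + b') := by
  have hsum' : (b + b' : ℂ) = s * (1 + s) := mod_cast hsum
  have hlin' : (s * b' : ℂ) = (1 + s) * b := mod_cast hlin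
  have hprod' : (35 * b * b' : ℂ) = 3 := mod_cast hprod
  linear_combination (-35 * (z + 1) ^ 2) * hsum' - 35 * (z + 1) * hlin' - hprod'

theorem exists_pos_resolvent_root :
    ∃ s : ℝ, 0 < s ∧ 35 * (s * (1 + s)) ^ 3 = 3 * (2 * s + 1) ^ 2 := by
  have hcont : ContinuousOn (fun s : ℝ => 35 * (s * (1 + s)) ^ 3 - 3 * (2 * s + 1) ^ 2)
      (Set.Icc 0 1) := by
    fun_prop
  obtain ⟨s, hs, hs0⟩ :=
    intermediate_value_Ioo zero_le_one hcont (show (0 : ℝ) ∈ Set.Ioo _ _ by norm_num)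
  exact ⟨s, hs.1, by linarith [hs0]⟩

theorem exists_quartic_factor_coeffs : ∃ s b b' : ℝ, s ^ 2 < 4 * b ∧
    b + b' = s * (1 + s) ∧ s * b' = (1 + s) * b ∧ 35 * b * b' = 3 := by
  obtain ⟨s, hs, hres⟩ := exists_pos_resolvent_root
  have h2s : 0 < 2 * s + 1 := by positivity
  refine ⟨s, s ^ 2 * (1 + s) / (2 * s + 1), s * (1 + s) ^ 2 / (2 * s + 1), ?_, ?_, ?_, ?_⟩
  · rw [mul_div_assoc', lt_div_iff₀ h2s]
    nlinarith
  · field_simp; ring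
  · field_simp
  · field_simp; linear_combination hres

/-- `3 + 35x + 105x² + 105x³ + 35x⁴ + 3x⁵` has all roots real and negative, while its
truncation `3 + 35x + 105x² + 105x³ + 35x⁴` has a pair of non-real roots. -/
theorem degree_hypothesis_cannot_be_relaxed :
    (∀ z : ℂ, 3 + 35 * z + 105 * z ^ 2 + 105 * z ^ 3 + 35 * z ^ 4 + 3 * z ^ 5 = 0 →
      ∃ x : ℝ, x < 0 ∧ z = (x : ℂ)) ∧
    (∃ z : ℂ, 3 + 35 * z + 105 * z ^ 2 + 105 * z ^ 3 + 35 * z ^ 4 = 0 ∧ z.im ≠ 0) := by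
  constructor
  · intro z hz
    have hsqrt : √55 < 10 := by rw [Real.sqrt_lt' (by norm_num)]; norm_num
    have hsqrt_nonneg := Real.sqrt_nonneg 55
    rw [quintic_eq_factored] at hz
    rcases mul_eq_zero.mp hz with hz | hβ
    rcases mul_eq_zero.mp hz with hz | hα
    · have hz1 : z + 1 = 0 := (mul_eq_zero.mp hz).resolve_left three_ne_zero
      exact ⟨-1, by norm_num, by push_cast; linear_combination hz1⟩
    · exact exists_neg_real_of_quadratic_eq_zero (by positivity) one_pos (by nlinarith) hα
    · exact exists_neg_real_of_quadratic_eq_zero (by linarith) one_pos (by nlinarith) hβ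
  · obtain ⟨s, b, b', hdisc, hsum, hlin, hprod⟩ := exists_quartic_factor_coeffs
    obtain ⟨u, hu, hu_im⟩ := exists_quadratic_eq_zero_im_ne_zero hdisc
    refine ⟨u - 1, ?_, by simpa using hu_im⟩
    rw [quartic_eq_factored hsum hlin hprod, sub_add_cancel, hu, mul_zero, zero_mul]
end
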